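/- (Proposition 6.) Let (A, φ) be a constrained incomplete AF and let makeComp^cIAF = vary(AW_A); vary(ATT_{A×A}); φ?. Then: (i) if (∅, v) ∈ ‖makeComp^cIAF‖ then (A_v, R_v) ∈ completions(A, φ); and (ii) for every (A*, R*) ∈ completions(A, φ) there is a valuation v with (∅, v) ∈ ‖makeComp^cIAF‖ and (A_v, R_v) = (A*, R*). -/

import Mathlib

noncomputable section

namespace DLPA

/-- Propositional variables: awareness, acceptance, attack, auxiliary acceptance
copies, plus countably many further auxiliary variables. -/
inductive PVar (U : Type) : Type
  | aw : U → PVar U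
  | inn : U → PVar U
  | att : U → U → PVar U
  | inn' : U → PVar U
  | aux : Nat → PVar U

-- DL-PA formulas and programs, by mutual recursion.
mutual
  inductive Form (U : Type) : Type
    | var : PVar U → Form U
    | neg : Form U → Form U
    | conj : Form U → Form U → Form U
    | box : Prog U → Form U → Form U
  inductive Prog (U : Type) : Type
    | add : PVar U → Prog U           -- +p
    | rem : PVar U → Prog U           -- −p
    | test : Form U → Prog U          -- φ?
    | seq : Prog U → Prog U → Prog U
    | choice : Prog U → Prog U → Prog U
    | conv : Prog U → Prog U
end

variable {U : Type}

/-- A valuation is a set of propositional variables. -/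
abbrev Val (U : Type) := Set (PVar U)

-- Satisfaction of formulas and interpretation of programs, by mutual recursion.
mutual
  def Sat : Val U → Form U → Prop
    | v, Form.var p => p ∈ v
    | v, Form.neg φ => ¬ Sat v φ
    | v, Form.conj φ ψ => Sat v φ ∧ Sat v ψ
    | v, Form.box π φ => ∀ w, Rel π v w → Sat w φ
  def Rel : Prog U → Val U → Val U → Prop
    | Prog.add p, v, w => w = v ∪ {p}
    | Prog.rem p, v, w => w = v \ {p}
    | Prog.test φ, v, w => w = v ∧ Sat v φ
    | Prog.seq π₁ π₂, v, w => ∃ u, Rel π₁ v u ∧ Rel π₂ u w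
    | Prog.choice π₁ π₂, v, w => Rel π₁ v w ∨ Rel π₂ v w
    | Prog.conv π, v, w => Rel π w v
end

def Form.falsum : Form U := Form.conj (Form.var (PVar.aux 0)) (Form.neg (Form.var (PVar.aux 0)))
def Form.top : Form U := Form.neg Form.falsum
def Form.impl (φ ψ : Form U) : Form U := Form.neg (Form.conj φ (Form.neg ψ))
def Form.disj (φ ψ : Form U) : Form U := Form.neg (Form.conj (Form.neg φ) (Form.neg ψ))
def Form.equiv (φ ψ : Form U) : Form U := Form.conj (Form.impl φ ψ) (Form.impl ψ φ)
def Form.dia (π : Prog U) (φ : Form U) : Form U := Form.neg (Form.box π (Form.neg φ))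
def Prog.skip : Prog U := Prog.test Form.top

/-- Sequential composition of a list of programs (`skip` for the empty list). -/
def seqList {β : Type} (f : β → Prog U) : List β → Prog U
  | [] => Prog.skip
  | p :: ps => Prog.seq (f p) (seqList f ps)

/-- Nondeterministic composition of a list of programs (`skip` for the empty list). -/
def unionList {β : Type} (f : β → Prog U) : List β → Prog U
  | [] => Prog.skip
  | [p] => f p
  | p :: ps => Prog.choice (f p) (unionList f ps)

def mkTrueOne (L : List (PVar U)) : Prog U :=
  unionList (fun p => Prog.seq (Prog.test (Form.neg (Form.var p))) (Prog.add p)) L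
def mkFalseOne (L : List (PVar U)) : Prog U :=
  unionList (fun p => Prog.seq (Prog.test (Form.var p)) (Prog.rem p)) L
def mkTrueSome (L : List (PVar U)) : Prog U :=
  seqList (fun p => Prog.choice (Prog.add p) Prog.skip) L
def mkFalseSome (L : List (PVar U)) : Prog U :=
  seqList (fun p => Prog.choice (Prog.rem p) Prog.skip) L
def vary (L : List (PVar U)) : Prog U :=
  seqList (fun p => Prog.choice (Prog.add p) (Prog.rem p)) L
/-- dis(ATT_R): for each pair (x,y) in the list, make true att_{x,y} or att_{y,x}. -/
def dis (L : List (U × U)) : Prog U :=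
  seqList (fun q => Prog.choice (Prog.add (PVar.att q.1 q.2)) (Prog.add (PVar.att q.2 q.1))) L

def conjList : List (Form U) → Form U
  | [] => Form.top
  | φ :: φs => Form.conj φ (conjList φs)
def disjList : List (Form U) → Form U
  | [] => Form.falsum
  | φ :: φs => Form.disj φ (disjList φs)

/-- The elements of a finite universe in a fixed order. -/
def enum (U : Type) [Fintype U] : List U := Finset.univ.toList

def bigConj [Fintype U] (f : U → Form U) : Form U := conjList ((enum U).map f)
def bigDisj [Fintype U] (f : U → Form U) : Form U := disjList ((enum U).map f)

def INlist (U : Type) [Fintype U] : List (PVar U) := (enum U).map PVar.inn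

/-- copy(IN_U) copies the value of in_x to in'_x, for every x ∈ U. -/
def copyIN (U : Type) [Fintype U] : Prog U :=
  seqList (fun x => Prog.choice
      (Prog.seq (Prog.test (Form.var (PVar.inn x))) (Prog.add (PVar.inn' x)))
      (Prog.seq (Prog.test (Form.neg (Form.var (PVar.inn x)))) (Prog.rem (PVar.inn' x))))
    (enum U)

def Well (U : Type) [Fintype U] : Form U :=
  bigConj (fun x => Form.impl (Form.var (PVar.inn x)) (Form.var (PVar.aw x)))

def ConFree (U : Type) [Fintype U] : Form U :=
  Form.conj (Well U) (bigConj fun x => bigConj fun y =>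
    Form.neg (Form.conj (Form.var (PVar.inn x))
      (Form.conj (Form.var (PVar.inn y)) (Form.var (PVar.att x y)))))

def AdmissibleF (U : Type) [Fintype U] : Form U :=
  Form.conj (ConFree U) (bigConj fun x => Form.impl (Form.var (PVar.inn x))
    (bigConj fun y => Form.impl (Form.conj (Form.var (PVar.aw y)) (Form.var (PVar.att y x)))
      (bigDisj fun z => Form.conj (Form.var (PVar.inn z)) (Form.var (PVar.att z y)))))

def StableF (U : Type) [Fintype U] : Form U :=
  Form.conj (Well U) (bigConj fun x => Form.impl (Form.var (PVar.aw x))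
    (Form.equiv (Form.var (PVar.inn x))
      (Form.neg (bigDisj fun y => Form.conj (Form.var (PVar.inn y)) (Form.var (PVar.att y x))))))

def CompleteF (U : Type) [Fintype U] : Form U :=
  Form.conj (ConFree U) (bigConj fun x => Form.equiv (Form.var (PVar.inn x))
    (bigConj fun y => Form.impl (Form.conj (Form.var (PVar.aw y)) (Form.var (PVar.att y x)))
      (bigDisj fun z => Form.conj (Form.var (PVar.inn z)) (Form.var (PVar.att z y)))))

def GroundedF (U : Type) [Fintype U] : Form U :=
  Form.conj (CompleteF U)
    (Form.box (Prog.seq (mkFalseOne (INlist U)) (mkFalseSome (INlist U))) (Form.neg (CompleteF U)))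

def PreferredF (U : Type) [Fintype U] : Form U :=
  Form.conj (AdmissibleF U)
    (Form.box (Prog.seq (mkTrueOne (INlist U)) (mkTrueSome (INlist U))) (Form.neg (AdmissibleF U)))

def NaiveF (U : Type) [Fintype U] : Form U :=
  Form.conj (ConFree U) (Form.box (mkTrueOne (INlist U)) (Form.neg (ConFree U)))

def IncludedInCp (U : Type) [Fintype U] : Form U :=
  bigConj fun x => Form.impl
    (Form.disj (Form.var (PVar.inn x)) (Form.conj (Form.var (PVar.aw x))
      (bigDisj fun y => Form.conj (Form.var (PVar.inn y)) (Form.var (PVar.att y x)))))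
    (Form.disj (Form.var (PVar.inn' x)) (Form.conj (Form.var (PVar.aw x))
      (bigDisj fun y => Form.conj (Form.var (PVar.inn' y)) (Form.var (PVar.att y x)))))

def IncludesCp (U : Type) [Fintype U] : Form U :=
  bigConj fun x => Form.impl
    (Form.disj (Form.var (PVar.inn' x)) (Form.conj (Form.var (PVar.aw x))
      (bigDisj fun y => Form.conj (Form.var (PVar.inn' y)) (Form.var (PVar.att y x)))))
    (Form.disj (Form.var (PVar.inn x)) (Form.conj (Form.var (PVar.aw x))
      (bigDisj fun y => Form.conj (Form.var (PVar.inn y)) (Form.var (PVar.att y x)))))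

/-- makeExt^σ = vary(IN_U); φ_σ? -/
def makeExt (U : Type) [Fintype U] (φ : Form U) : Prog U :=
  Prog.seq (vary (INlist U)) (Prog.test φ)

def SemiStableF (U : Type) [Fintype U] : Form U :=
  Form.conj (CompleteF U)
    (Form.box (Prog.seq (copyIN U) (makeExt U (CompleteF U)))
      (Form.impl (IncludesCp U) (IncludedInCp U)))

/-- A_v -/
def Av (v : Val U) : Set U := {x | PVar.aw x ∈ v}
/-- R_v -/
def Rv (v : Val U) : Set (U × U) := {q | q.1 ∈ Av v ∧ q.2 ∈ Av v ∧ PVar.att q.1 q.2 ∈ v}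
/-- E(v) -/
def Ev (v : Val U) : Set U := {x | PVar.inn x ∈ v}
/-- {x ∈ U : in'_x ∈ v} -/
def Cv (v : Val U) : Set U := {x | PVar.inn' x ∈ v}
/-- v_(A,R) = AW_A ∪ ATT_R -/
def valOf (A : Set U) (R : Set (U × U)) : Val U :=
  (PVar.aw '' A) ∪ ((fun q : U × U => PVar.att q.1 q.2) '' R)

/-- E⁺, the set of arguments of A attacked by E in (A,R). -/
def attacked (A : Set U) (R : Set (U × U)) (E : Set U) : Set U :=
  {x ∈ A | ∃ y ∈ E, (y, x) ∈ R}
/-- E⊕ = E ∪ E⁺, the range of E. -/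
def rangeOf (A : Set U) (R : Set (U × U)) (E : Set U) : Set U :=
  E ∪ attacked A R E

def IsConflictFree (A : Set U) (R : Set (U × U)) (E : Set U) : Prop :=
  E ⊆ A ∧ E ∩ attacked A R E = ∅
def Defends (A : Set U) (R : Set (U × U)) (E : Set U) (a : U) : Prop :=
  ∀ x ∈ A, (x, a) ∈ R → x ∈ attacked A R E
def IsAdmissibleExt (A : Set U) (R : Set (U × U)) (E : Set U) : Prop :=
  IsConflictFree A R E ∧ ∀ a ∈ E, Defends A R E a
def IsStableExt (A : Set U) (R : Set (U × U)) (E : Set U) : Prop :=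
  IsConflictFree A R E ∧ A \ E ⊆ attacked A R E
def IsCompleteExt (A : Set U) (R : Set (U × U)) (E : Set U) : Prop :=
  IsConflictFree A R E ∧ E = {a ∈ A | Defends A R E a}
def IsGroundedExt (A : Set U) (R : Set (U × U)) (E : Set U) : Prop :=
  IsCompleteExt A R E ∧ ∀ E', IsCompleteExt A R E' → E' ⊆ E → E' = E
def IsPreferredExt (A : Set U) (R : Set (U × U)) (E : Set U) : Prop :=
  IsCompleteExt A R E ∧ ∀ E', IsCompleteExt A R E' → E ⊆ E' → E' = E
def IsNaiveExt (A : Set U) (R : Set (U × U)) (E : Set U) : Prop :=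
  IsConflictFree A R E ∧ ∀ E', IsConflictFree A R E' → E ⊆ E' → E' = E
def IsSemiStableExt (A : Set U) (R : Set (U × U)) (E : Set U) : Prop :=
  IsCompleteExt A R E ∧ ¬ ∃ E', IsCompleteExt A R E' ∧ rangeOf A R E ⊂ rangeOf A R E'

end DLPA

end

noncomputable section
open DLPA

/-- The list of awareness variables of a finite set of arguments, in a fixed order. -/
def AWlist {U : Type} (A : Finset U) : List (PVar U) := A.toList.map PVar.aw
/-- The list of attack variables of a finite attack relation, in a fixed order. -/
def ATTlist {U : Type} (R : Finset (U × U)) : List (PVar U) :=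
  R.toList.map (fun q => PVar.att q.1 q.2)

/-- The defining conditions of an incomplete AF (A^F, R^F, A^?, R^?). -/
def IAFConds {U : Type} (AF Aq : Set U) (RF Rq : Set (U × U)) : Prop :=
  Disjoint AF Aq ∧ Disjoint RF Rq ∧
    RF ⊆ (AF ∪ Aq) ×ˢ (AF ∪ Aq) ∧ Rq ⊆ (AF ∪ Aq) ×ˢ (AF ∪ Aq)

/-- (A*, R*) is a completion of the IAF (A^F, R^F, A^?, R^?). -/
def IsCompletionOfIAF {U : Type} (AF Aq : Set U) (RF Rq : Set (U × U))
    (As : Set U) (Rs : Set (U × U)) : Prop :=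
  AF ⊆ As ∧ As ⊆ AF ∪ Aq ∧
    RF ∩ As ×ˢ As ⊆ Rs ∧ Rs ⊆ (RF ∪ Rq) ∩ As ×ˢ As

end

noncomputable section
open DLPA

/-- φ is a program-free (Boolean) formula using only variables from S. -/
def UsesOnly {U : Type} (S : Set (PVar U)) : Form U → Prop
  | Form.var p => p ∈ S
  | Form.neg φ => UsesOnly S φ
  | Form.conj φ ψ => UsesOnly S φ ∧ UsesOnly S ψ
  | Form.box _ _ => False

/-- AW_A ∪ ATT_{A×A}, the vocabulary of a constrained incomplete AF with domain A. -/
def cVocab {U : Type} (A : Set U) : Set (PVar U) :=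
  (PVar.aw '' A) ∪ ((fun q : U × U => PVar.att q.1 q.2) '' (A ×ˢ A))

/-- AW_A ∪ IN_A ∪ ATT_{A×A}. -/
def cVocabFull {U : Type} (A : Set U) : Set (PVar U) :=
  cVocab A ∪ (PVar.inn '' A)

/-- (A*, R*) belongs to completions(A, φ). -/
def IsCCompletion {U : Type} (A : Set U) (φ : Form U)
    (As : Set U) (Rs : Set (U × U)) : Prop :=
  ∃ v : Val U, v ⊆ cVocabFull A ∧ Sat v φ ∧ Av v = As ∧ Rv v = Rs

end

/-!
From the empty valuation, `vary(L₁); vary(L₂)` reaches exactly the valuations made of variables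
of `L₁` and `L₂`, so `makeComp` reaches the models of `φ` inside `AW_A ∪ ATT_{A×A}`, which are
completion valuations with every acceptance variable false. Conversely, erasing the acceptance
variables of a completion valuation changes neither `(A_v, R_v)` nor the truth of `φ`, since
`φ` does not mention them.
-/

namespace DLPA

variable {U : Type}

theorem rel_vary_iff (L : List (PVar U)) (u w : Val U) :
    Rel (vary L) u w ↔ ∀ p ∉ L, (p ∈ w ↔ p ∈ u) := by
  classical
  induction L generalizing u with
  | nil =>
    simp only [vary, seqList, Prog.skip, Rel, List.not_mem_nil, not_false_eq_true,
      forall_const]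
    constructor
    · rintro ⟨rfl, -⟩ p
      rfl
    · exact fun h => ⟨Set.ext h, by simp [Sat, Form.top, Form.falsum]⟩
  | cons p L ih =>
    simp only [vary, seqList, Rel] at ih ⊢
    constructor
    · rintro ⟨u', hu', hw⟩ q hq
      rw [List.mem_cons, not_or] at hq
      rw [ih] at hw
      rcases hu' with rfl | rfl <;> simp [hw q hq.2, hq.1]
    · intro h
      -- the first step already gives `p` its final value
      refine ⟨if p ∈ w then u ∪ {p} else u \ {p}, by split_ifs <;> simp, ?_⟩
      rw [ih]
      intro q hq
      by_cases hqp : q = p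
      · subst hqp
        split_ifs <;> simp [*]
      · rw [h q (by simp [hqp, hq])]
        split_ifs <;> simp [hqp]

theorem rel_vary_seq_vary_seq_test_empty_iff (L₁ L₂ : List (PVar U)) (φ : Form U)
    (v : Val U) :
    Rel (Prog.seq (vary L₁) (Prog.seq (vary L₂) (Prog.test φ))) ∅ v ↔
      v ⊆ {p | p ∈ L₁ ∨ p ∈ L₂} ∧ Sat v φ := by
  simp only [Rel, rel_vary_iff]
  constructor
  · rintro ⟨u, hu, _, hv, rfl, hsat⟩
    refine ⟨fun p hp => ?_, hsat⟩
    by_contra! h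
    rw [Set.mem_ofPred_eq, not_or] at h
    exact (hu p h.1).1 ((hv p h.2).1 hp)
  · rintro ⟨hsub, hsat⟩
    refine ⟨{p ∈ v | p ∈ L₁}, fun p hp => by simp [hp], v, fun p hp => ?_, rfl, hsat⟩
    exact ⟨fun hpv => ⟨hpv, (hsub hpv).resolve_right hp⟩, And.left⟩

theorem sat_congr_of_usesOnly {S : Set (PVar U)} :
    ∀ {φ : Form U}, UsesOnly S φ →
      ∀ {v w : Val U}, (∀ p ∈ S, (p ∈ v ↔ p ∈ w)) → (Sat v φ ↔ Sat w φ)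
  | Form.var p, h, _, _, hvw => hvw p h
  | Form.neg ψ, h, _, _, hvw => not_congr (sat_congr_of_usesOnly (φ := ψ) h hvw)
  | Form.conj ψ χ, h, _, _, hvw =>
      and_congr (sat_congr_of_usesOnly (φ := ψ) h.1 hvw)
        (sat_congr_of_usesOnly (φ := χ) h.2 hvw)
  | Form.box _ _, h, _, _, _ => h.elim

theorem Av_diff_inn_image (v : Val U) (X : Set U) : Av (v \ PVar.inn '' X) = Av v := by
  ext x
  simp [Av]

theorem Rv_diff_inn_image (v : Val U) (X : Set U) : Rv (v \ PVar.inn '' X) = Rv v := by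
  ext q
  simp [Rv, Av]

end DLPA

open DLPA

theorem mem_AWlist_or_mem_ATTlist_iff {U : Type} (A : Finset U) (p : PVar U) :
    p ∈ AWlist A ∨ p ∈ ATTlist (A ×ˢ A) ↔ p ∈ cVocab (A : Set U) := by
  simp [AWlist, ATTlist, cVocab, Finset.mem_product, and_assoc]

open DLPA in
/-- Proposition 6. -/
theorem makeComp_cIAF_correct
    (U : Type) [Fintype U] [Nonempty U]
    (A : Finset U) (φ : Form U) (hφ : UsesOnly (cVocab (A : Set U)) φ) :
    (∀ v : Val U,
        Rel (Prog.seq (vary (AWlist A)) (Prog.seq (vary (ATTlist (A ×ˢ A))) (Prog.test φ)))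
            (∅ : Val U) v →
        IsCCompletion (A : Set U) φ (Av v) (Rv v)) ∧
    (∀ (As : Set U) (Rs : Set (U × U)),
        IsCCompletion (A : Set U) φ As Rs →
        ∃ v : Val U,
          Rel (Prog.seq (vary (AWlist A)) (Prog.seq (vary (ATTlist (A ×ˢ A))) (Prog.test φ)))
              (∅ : Val U) v ∧
          Av v = As ∧ Rv v = Rs) := by
  have hvocab : {p | p ∈ AWlist A ∨ p ∈ ATTlist (A ×ˢ A)} = cVocab (A : Set U) :=
    Set.ext (mem_AWlist_or_mem_ATTlist_iff A)
  simp only [rel_vary_seq_vary_seq_test_empty_iff, hvocab]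
  constructor
  · rintro v ⟨hsub, hsat⟩
    exact ⟨v, hsub.trans Set.subset_union_left, hsat, rfl, rfl⟩
  · rintro _ _ ⟨v, hsub, hsat, rfl, rfl⟩
    have hagree : ∀ p ∈ cVocab (A : Set U), (p ∈ v ↔ p ∈ v \ PVar.inn '' A) := by
      rintro p (⟨x, -, rfl⟩ | ⟨q, -, rfl⟩) <;> simp
    refine ⟨v \ PVar.inn '' A, ⟨?_, (sat_congr_of_usesOnly hφ hagree).1 hsat⟩,
      Av_diff_inn_image v _, Rv_diff_inn_image v _⟩
    rw [Set.sdiff_subset_iff, Set.union_comm]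
    exact hsub
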